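/- Let p⃗∈(0,1]^n and let p̲∈(0,min{p₋,1}) where p₋:=min{p₁,…,pₙ}. Then for any {λ_i}_{i∈N}⊂C and dilated balls {B^{(i)}}_{i∈N}⊂𝔅, one has Σ_{i∈N}|λ_i| ≤ ‖ { Σ_{i∈N} [ |λ_i| 1_{B^{(i)}} / ‖1_{B^{(i)}}‖_{L^{p⃗}(R^n)} ]^{p̲} }^{1/p̲} ‖_{L^{p⃗}(R^n)}. -/

import Mathlib

open MeasureTheory ENNReal Set Filter
open scoped Topology Pointwise NNReal ENNReal

noncomputable section

namespace Aniso

/-- `ℝ^n`, realized as functions `Fin n → ℝ`. -/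
abbrev V (n : ℕ) := Fin n → ℝ

/-- Invertible real `n × n` matrices. -/
abbrev GLn (n : ℕ) := Matrix.GeneralLinearGroup (Fin n) ℝ

variable {n : ℕ}

/-- `b := |det A|`. -/
def absDet (A : GLn n) : ℝ := |Matrix.det (A : Matrix (Fin n) (Fin n) ℝ)|

/-- A matrix is expansive (a dilation) if all of its (complex) eigenvalues have
modulus strictly greater than one. -/
def Expansive (A : GLn n) : Prop :=
  ∀ μ ∈ spectrum ℂ ((A : Matrix (Fin n) (Fin n) ℝ).map (algebraMap ℝ ℂ)),
    1 < ‖μ‖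

/-- The Euclidean norm on `Fin n → ℝ`. -/
def euclNorm (x : V n) : ℝ := Real.sqrt (∑ i, x i ^ 2)

/-- An (open, centered) ellipsoid: the image of the open Euclidean unit ball under an
invertible linear map. -/
def IsEllipsoid (Δ : Set (V n)) : Prop :=
  ∃ T : GLn n,
    Δ = (fun x => Matrix.mulVec (T : Matrix (Fin n) (Fin n) ℝ) x) '' {x | euclNorm x < 1}

/-- The sets `B_k := A^k Δ`. -/
def dball (A : GLn n) (Δ : Set (V n)) (k : ℤ) : Set (V n) :=
  (fun x => Matrix.mulVec ((A ^ k : GLn n) : Matrix (Fin n) (Fin n) ℝ) x) '' Δ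

/-- The step homogeneous quasi-norm `ρ(x) := Σ_{k ∈ ℤ} b^k 1_{B_{k+1} \ B_k}(x)`
(so `ρ(0) = 0`). -/
def rho (A : GLn n) (Δ : Set (V n)) (x : V n) : ℝ :=
  ∑' k : ℤ, (dball A Δ (k + 1) \ dball A Δ k).indicator (fun _ => absDet A ^ k) x

/-- The standing assumptions on a dilation `A` and the associated ellipsoid `Δ`:
`A` is expansive, `Δ` is an open ellipsoid with `|Δ| = 1`, and there is `r ∈ (1, ∞)`
with `Δ ⊆ rΔ ⊆ AΔ`. -/
structure DilationSetup (A : GLn n) (Δ : Set (V n)) (r : ℝ) : Prop where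
  expansive : Expansive A
  isOpen : IsOpen Δ
  ellipsoid : IsEllipsoid Δ
  volume_eq : volume Δ = 1
  one_lt : 1 < r
  subset_smul : Δ ⊆ r • Δ
  smul_subset : r • Δ ⊆ (fun x => Matrix.mulVec (A : Matrix (Fin n) (Fin n) ℝ) x) '' Δ

/-- The family `𝔅` of dilated balls `x + B_k`. -/
def dilatedBalls (A : GLn n) (Δ : Set (V n)) : Set (Set (V n)) :=
  {S | ∃ (x : V n) (k : ℤ), S = (x + ·) '' dball A Δ k}

/-- One step of the iterated mixed-norm: the `L^p` norm in one real variable, with the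
usual modification (essential supremum) when `p = ∞`. -/
def lpStep (p : ℝ≥0∞) (g : ℝ → ℝ≥0∞) : ℝ≥0∞ :=
  if p = ∞ then essSup g volume else (∫⁻ t, g t ^ p.toReal) ^ (1 / p.toReal)

/-- The mixed-norm `‖f‖_{L^{p⃗}(ℝ^n)}`, integrating first in `x₁`, then `x₂`, …,
finally `xₙ`, of an `ℝ≥0∞`-valued function. -/
def mixedNorm : ∀ (n : ℕ), (Fin n → ℝ≥0∞) → ((V n) → ℝ≥0∞) → ℝ≥0∞
  | 0, _, f => f (fun i => i.elim0)
  | (m + 1), p, f =>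
      lpStep (p (Fin.last m))
        (fun t => mixedNorm m (fun i => p i.castSucc) (fun y => f (Fin.snoc y t)))

/-- The anisotropic Hardy–Littlewood maximal operator, over dilated balls. -/
def maximalFn (A : GLn n) (Δ : Set (V n)) (f : V n → ℝ≥0∞) (x : V n) : ℝ≥0∞ :=
  ⨆ (S : Set (V n)) (_ : S ∈ dilatedBalls A Δ) (_ : x ∈ S),
    (volume S)⁻¹ * ∫⁻ z in S, f z

/-- The one-dimensional (uncentered) Hardy–Littlewood maximal operator acting in the
`i`-th coordinate. -/
def coordMax (i : Fin n) (g : V n → ℝ≥0∞) (x : V n) : ℝ≥0∞ :=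
  ⨆ (a : ℝ) (b : ℝ) (_ : a ≤ x i) (_ : x i ≤ b) (_ : a < b),
    (ENNReal.ofReal (b - a))⁻¹ * ∫⁻ t in Set.Icc a b, g (Function.update x i t)

/-- Auxiliary iteration: apply `coordMax` successively in coordinates `0, …, m-1`. -/
def iterMaxAux (g : V n → ℝ≥0∞) : ℕ → (V n → ℝ≥0∞)
  | 0 => g
  | (m + 1) => if h : m < n then coordMax ⟨m, h⟩ (iterMaxAux g m) else iterMaxAux g m

/-- The iterated maximal function `M(f) = Mₙ(⋯(M₁ f)⋯)`. -/
def iterMax (g : V n → ℝ≥0∞) : V n → ℝ≥0∞ := iterMaxAux g n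

/-- The `ℓ^u` norm of a sequence in `ℝ≥0∞`, with the usual modification when `u = ∞`. -/
def ellu (u : ℝ≥0∞) (a : ℕ → ℝ≥0∞) : ℝ≥0∞ :=
  if u = ∞ then ⨆ j, a j else (∑' j, a j ^ u.toReal) ^ (1 / u.toReal)

/-- Tempered distributions on `ℝ^n`. -/
abbrev TDist (n : ℕ) := SchwartzMap (V n) ℂ →L[ℝ] ℂ

/-- `|(f ∗ φ_k)(y)|`, where `φ_k(z) := b^k φ(A^k z)`: the pairing of the tempered
distribution `f` with the Schwartz function `z ↦ b^k φ(A^k(y − z))`. -/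
def schwartzConv (A : GLn n) (f : TDist n) (φ : SchwartzMap (V n) ℂ) (k : ℤ)
    (y : V n) : ℝ≥0∞ :=
  ⨆ (ψ : SchwartzMap (V n) ℂ)
    (_ : ∀ z, ψ z =
      (absDet A ^ k : ℝ) •
        φ (Matrix.mulVec ((A ^ k : GLn n) : Matrix (Fin n) (Fin n) ℝ) (y - z))),
    (‖f ψ‖₊ : ℝ≥0∞)

/-- The truncated non-tangential maximal function `M_φ^{(K,L)}(f)`. -/
def maxNT (A : GLn n) (Δ : Set (V n)) (f : TDist n) (φ : SchwartzMap (V n) ℂ)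
    (K : ℤ) (L : ℝ) (x : V n) : ℝ≥0∞ :=
  ⨆ (k : ℤ) (_ : k ≤ K) (y : V n) (_ : y ∈ (x + ·) '' dball A Δ k),
    schwartzConv A f φ k y *
      ENNReal.ofReal
        ((max 1 (rho A Δ (Matrix.mulVec ((A ^ (-K) : GLn n) : Matrix (Fin n) (Fin n) ℝ) y))) ^ (-L) *
          (1 + absDet A ^ (-k - K)) ^ (-L))

/-- The tangential maximal function `T_φ^{N(K,L)}(f)`. -/
def maxTan (A : GLn n) (Δ : Set (V n)) (f : TDist n) (φ : SchwartzMap (V n) ℂ)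
    (N : ℕ) (K : ℤ) (L : ℝ) (x : V n) : ℝ≥0∞ :=
  ⨆ (k : ℤ) (_ : k ≤ K) (y : V n),
    schwartzConv A f φ k y *
      ENNReal.ofReal
        ((max 1 (rho A Δ (Matrix.mulVec ((A ^ (-k) : GLn n) : Matrix (Fin n) (Fin n) ℝ) (x - y)))) ^ (-(N : ℝ)) *
          ((max 1 (rho A Δ (Matrix.mulVec ((A ^ (-K) : GLn n) : Matrix (Fin n) (Fin n) ℝ) y))) ^ (-L) *
            (1 + absDet A ^ (-k - K)) ^ (-L)))

/-- The partial derivative in the `i`-th coordinate direction. -/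
def partialD (i : Fin n) (g : V n → ℂ) : V n → ℂ :=
  fun x => fderiv ℝ g x (Pi.single i 1)

/-- The iterated partial derivative `∂^α`. -/
def multiD (α : Fin n → ℕ) (g : V n → ℂ) : V n → ℂ :=
  (List.finRange n).foldr (fun i h => (partialD i)^[α i] h) g

/-- Membership in `𝓢_N(ℝ^n)`: all seminorms `‖φ‖_{α,m} = sup_x ρ(x)^m |∂^α φ(x)|`
with `|α| ≤ N`, `m ≤ N` are at most `1`. -/
def InSN (A : GLn n) (Δ : Set (V n)) (N : ℕ) (φ : SchwartzMap (V n) ℂ) : Prop :=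
  ∀ (α : Fin n → ℕ) (m : ℕ), (∑ i, α i) ≤ N → m ≤ N →
    ∀ x : V n, rho A Δ x ^ m * ‖multiD α (fun z => φ z) x‖ ≤ 1

/-- The non-tangential grand maximal function `M_N(f)`. -/
def grandMaximal (A : GLn n) (Δ : Set (V n)) (N : ℕ) (f : TDist n) (x : V n) : ℝ≥0∞ :=
  ⨆ (φ : SchwartzMap (V n) ℂ) (_ : InSN A Δ N φ) (k : ℤ) (y : V n)
    (_ : y ∈ (x + ·) '' dball A Δ k), schwartzConv A f φ k y

/-- The anisotropic Peetre maximal function `(φ*_j f)_t`. -/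
def peetre (A : GLn n) (Δ : Set (V n)) (f : TDist n) (φ : SchwartzMap (V n) ℂ)
    (j : ℤ) (t : ℝ) (x : V n) : ℝ≥0∞ :=
  essSup (fun y => schwartzConv A f φ j (x + y) /
      ENNReal.ofReal ((1 + absDet A ^ j * rho A Δ y) ^ t)) volume

/-- The Fourier transform of a Schwartz function on `ℝ^n`. -/
def ft (φ : SchwartzMap (V n) ℂ) (ξ : V n) : ℂ :=
  ∫ x : V n, Complex.exp (-(2 * Real.pi * Complex.I) * (∑ i, (x i : ℂ) * (ξ i : ℂ))) * φ x

/-- The Hilbert–Schmidt norm `‖A‖` of a matrix. -/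
def matNorm (A : GLn n) : ℝ := Real.sqrt (∑ i, ∑ j, ((A : Matrix (Fin n) (Fin n) ℝ) i j) ^ 2)

/-- Polynomial functions on `ℝ^n` of (total) degree at most `s`. -/
def polyOfDeg (n s : ℕ) : Set (V n → ℂ) :=
  {P | ∃ Q : MvPolynomial (Fin n) ℂ, Q.totalDegree ≤ s ∧
    ∀ x, P x = MvPolynomial.eval (fun i => (x i : ℂ)) Q}

/-- The anisotropic mixed-norm Campanato seminorm `‖f‖_{𝓛^A_{p⃗,q,s}}`. -/
def campanato (A : GLn n) (Δ : Set (V n)) (p : Fin n → ℝ≥0∞) (q : ℝ) (s : ℕ)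
    (f : V n → ℂ) : ℝ≥0∞ :=
  ⨆ (B : Set (V n)) (_ : B ∈ dilatedBalls A Δ), ⨅ (P : V n → ℂ) (_ : P ∈ polyOfDeg n s),
    (volume B / mixedNorm n p (B.indicator fun _ => 1)) *
      ((volume B)⁻¹ * ∫⁻ x in B, (‖f x - P x‖₊ : ℝ≥0∞) ^ q) ^ (1 / q)

/-- An anisotropic mixed-norm `(p⃗, r, s)`-atom supported in the dilated ball `B`. -/
def IsMixedAtom (A : GLn n) (Δ : Set (V n)) (p : Fin n → ℝ≥0∞) (r : ℝ≥0∞) (s : ℕ)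
    (a : V n → ℂ) (B : Set (V n)) : Prop :=
  B ∈ dilatedBalls A Δ ∧
  Function.support a ⊆ B ∧
  eLpNorm a r volume ≤ volume B ^ (1 / r).toReal / mixedNorm n p (B.indicator fun _ => 1) ∧
  ∀ γ : Fin n → ℕ, (∑ i, γ i) ≤ s → (∫ x : V n, a x * ∏ i, (x i : ℂ) ^ γ i) = 0

/-- The quantity `‖{Σ_i [|λ_i| 1_{B_i} / ‖1_{B_i}‖_{p⃗}]^{p̲}}^{1/p̲}‖_{L^{p⃗}}`. -/
def atomSum (p : Fin n → ℝ≥0∞) (pu : ℝ) (lam : ℕ → ℂ) (Bs : ℕ → Set (V n)) : ℝ≥0∞ :=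
  mixedNorm n p (fun x =>
    (∑' i, (((‖lam i‖₊ : ℝ≥0∞) * (Bs i).indicator (fun _ => (1 : ℝ≥0∞)) x) /
        mixedNorm n p ((Bs i).indicator fun _ => 1)) ^ pu) ^ (1 / pu))

/-- The atomic quasi-norm of a function `g`: the infimum of `atomSum` over all atomic
decompositions `g = Σ λ_i a_i` converging in `𝓢'(ℝ^n)`. -/
def atomicNorm (A : GLn n) (Δ : Set (V n)) (p : Fin n → ℝ≥0∞) (pu : ℝ) (r : ℝ≥0∞)
    (s : ℕ) (g : V n → ℂ) : ℝ≥0∞ :=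
  ⨅ (lam : ℕ → ℂ) (a : ℕ → V n → ℂ) (Bs : ℕ → Set (V n))
    (_ : ∀ i, IsMixedAtom A Δ p r s (a i) (Bs i))
    (_ : ∀ ψ : SchwartzMap (V n) ℂ,
      Tendsto (fun m => ∑ i ∈ Finset.range m, lam i * ∫ x, a i x * ψ x) atTop
        (𝓝 (∫ x, g x * ψ x))),
    atomSum p pu lam Bs

end Aniso

/-!
Write `‖·‖` for the mixed norm. Every dilated ball `B` is open, nonempty and bounded, so it contains
and is contained in coordinate boxes and `0 < ‖1_B‖ < ∞`; hence
`|λᵢ| = ‖(|λᵢ| / ‖1_{Bᵢ}‖) 1_{Bᵢ}‖`. When all exponents are at most `1`, the mixed norm is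
superadditive on nonnegative functions: this is the reverse Minkowski inequality
`‖f‖_p + ‖g‖_p ≤ ‖f + g‖_p` for `0 < p ≤ 1`, a consequence of the concavity of `t ↦ t ^ p`,
applied one variable at a time. So `∑ |λᵢ| ≤ ‖∑ᵢ (|λᵢ| / ‖1_{Bᵢ}‖) 1_{Bᵢ}‖`, and the pointwise
embedding `ℓ¹ ⊆ ℓ^p̲` for `p̲ ≤ 1` finishes the proof.
-/

theorem Bornology.IsBounded.image_of_continuous {X Y : Type*} [PseudoMetricSpace X] [ProperSpace X]
    [PseudoMetricSpace Y] {s : Set X} (hs : Bornology.IsBounded s) {f : X → Y}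
    (hf : Continuous f) : Bornology.IsBounded (f '' s) :=
  (hs.isCompact_closure.image hf).isBounded.subset (image_mono subset_closure)

namespace ENNReal

theorem rpow_sum_le_sum_rpow {ι : Type*} (s : Finset ι) (f : ι → ℝ≥0∞) {p : ℝ}
    (hp₀ : 0 < p) (hp₁ : p ≤ 1) : (∑ i ∈ s, f i) ^ p ≤ ∑ i ∈ s, f i ^ p := by
  classical
  induction s using Finset.induction with
  | empty => simp [hp₀]
  | insert j s hj ih =>
    rw [Finset.sum_insert hj, Finset.sum_insert hj]
    exact (rpow_add_le_add_rpow _ _ hp₀.le hp₁).trans (by gcongr)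

theorem tsum_le_rpow_tsum_rpow {ι : Type*} (f : ι → ℝ≥0∞) {p : ℝ} (hp₀ : 0 < p) (hp₁ : p ≤ 1) :
    ∑' i, f i ≤ (∑' i, f i ^ p) ^ (1 / p) := by
  rw [ENNReal.tsum_eq_iSup_sum]
  refine iSup_le fun s => ?_
  calc ∑ i ∈ s, f i = ((∑ i ∈ s, f i) ^ p) ^ (1 / p) := by
        rw [← ENNReal.rpow_mul, mul_one_div_cancel hp₀.ne', ENNReal.rpow_one]
    _ ≤ (∑' i, f i ^ p) ^ (1 / p) := by
        gcongr
        exact (rpow_sum_le_sum_rpow s f hp₀ hp₁).trans (ENNReal.sum_le_tsum s)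

theorem arith_mean2_rpow_le_rpow_arith_mean {w₁ w₂ : ℝ≥0∞} (hw : w₁ + w₂ = 1) (a b : ℝ≥0∞) {p : ℝ}
    (hp₀ : 0 < p) (hp₁ : p ≤ 1) : w₁ * a ^ p + w₂ * b ^ p ≤ (w₁ * a + w₂ * b) ^ p := by
  have key := ENNReal.rpow_arith_mean_le_arith_mean2_rpow w₁ w₂ (a ^ p) (b ^ p) hw
    (one_le_one_div hp₀ hp₁)
  rw [← ENNReal.rpow_mul, ← ENNReal.rpow_mul, mul_one_div_cancel hp₀.ne', ENNReal.rpow_one,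
    ENNReal.rpow_one] at key
  calc w₁ * a ^ p + w₂ * b ^ p = ((w₁ * a ^ p + w₂ * b ^ p) ^ (1 / p)) ^ p := by
        rw [← ENNReal.rpow_mul, one_div_mul_cancel hp₀.ne', ENNReal.rpow_one]
    _ ≤ (w₁ * a + w₂ * b) ^ p := by gcongr

theorem lintegral_inv_mul_rpow_eq_one {α : Type*} [MeasurableSpace α] {μ : Measure α}
    {f : α → ℝ≥0∞} {p : ℝ} (hp₀ : 0 < p) (h0 : (∫⁻ a, f a ^ p ∂μ) ^ (1 / p) ≠ 0)
    (htop : (∫⁻ a, f a ^ p ∂μ) ^ (1 / p) ≠ ∞) :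
    ∫⁻ a, (((∫⁻ a, f a ^ p ∂μ) ^ (1 / p))⁻¹ * f a) ^ p ∂μ = 1 := by
  set A := (∫⁻ a, f a ^ p ∂μ) ^ (1 / p)
  have hApow : ∫⁻ a, f a ^ p ∂μ = A ^ p := by
    rw [← ENNReal.rpow_mul, one_div_mul_cancel hp₀.ne', ENNReal.rpow_one]
  simp_rw [ENNReal.mul_rpow_of_nonneg _ _ hp₀.le]
  rw [lintegral_const_mul' _ _ (by simp [h0, hp₀.le]), hApow, ENNReal.inv_rpow,
    ENNReal.inv_mul_cancel (by simp [h0, hp₀.le]) (by simp [htop, hp₀.le])]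

theorem lintegral_Lp_add_lintegral_Lp_le {α : Type*} [MeasurableSpace α] {μ : Measure α}
    {f g : α → ℝ≥0∞} (hf : AEMeasurable f μ) {p : ℝ} (hp₀ : 0 < p) (hp₁ : p ≤ 1) :
    (∫⁻ a, f a ^ p ∂μ) ^ (1 / p) + (∫⁻ a, g a ^ p ∂μ) ^ (1 / p) ≤
      (∫⁻ a, (f a + g a) ^ p ∂μ) ^ (1 / p) := by
  set A := (∫⁻ a, f a ^ p ∂μ) ^ (1 / p)
  set B := (∫⁻ a, g a ^ p ∂μ) ^ (1 / p)
  have hA_le : A ≤ (∫⁻ a, (f a + g a) ^ p ∂μ) ^ (1 / p) :=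
    ENNReal.rpow_le_rpow (lintegral_mono fun a => ENNReal.rpow_le_rpow le_self_add hp₀.le)
      (by positivity)
  have hB_le : B ≤ (∫⁻ a, (f a + g a) ^ p ∂μ) ^ (1 / p) :=
    ENNReal.rpow_le_rpow (lintegral_mono fun a => ENNReal.rpow_le_rpow le_add_self hp₀.le)
      (by positivity)
  rcases eq_or_ne A 0 with hA0 | hA0
  · simpa [hA0] using hB_le
  rcases eq_or_ne B 0 with hB0 | hB0
  · simpa [hB0] using hA_le
  rcases eq_or_ne A ∞ with hAt | hAt
  · exact le_top.trans_eq (top_le_iff.mp (hAt ▸ hA_le)).symm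
  rcases eq_or_ne B ∞ with hBt | hBt
  · exact le_top.trans_eq (top_le_iff.mp (hBt ▸ hB_le)).symm
  set σ := A + B
  have hσ0 : σ ≠ 0 := by simp [σ, hA0]
  have hσt : σ ≠ ∞ := by simp [σ, hAt, hBt]
  have hw : A / σ + B / σ = 1 := by rw [ENNReal.div_add_div_same, ENNReal.div_self hσ0 hσt]
  -- `f + g` is `σ` times the convex combination, with weights `A / σ` and `B / σ`, of the
  -- normalised functions `f / A` and `g / B`; concavity of `t ↦ t ^ p` does the rest.
  have hsplit : ∀ a, f a + g a = σ * (A / σ * (A⁻¹ * f a) + B / σ * (B⁻¹ * g a)) := by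
    intro a
    rw [mul_add, ← mul_assoc σ, ← mul_assoc σ, ENNReal.mul_div_cancel hσ0 hσt,
      ENNReal.mul_div_cancel hσ0 hσt, ← mul_assoc, ← mul_assoc, ENNReal.mul_inv_cancel hA0 hAt,
      ENNReal.mul_inv_cancel hB0 hBt, one_mul, one_mul]
  have hσp : σ ^ p ≤ ∫⁻ a, (f a + g a) ^ p ∂μ := by
    calc σ ^ p
        = σ ^ p * (A / σ * ∫⁻ a, (A⁻¹ * f a) ^ p ∂μ + B / σ * ∫⁻ a, (B⁻¹ * g a) ^ p ∂μ) := by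
          rw [lintegral_inv_mul_rpow_eq_one hp₀ hA0 hAt,
            lintegral_inv_mul_rpow_eq_one hp₀ hB0 hBt, mul_one, mul_one, hw, mul_one]
      _ = σ ^ p * ∫⁻ a, (A / σ * (A⁻¹ * f a) ^ p + B / σ * (B⁻¹ * g a) ^ p) ∂μ := by
          rw [lintegral_add_left' (((hf.const_mul _).pow_const p).const_mul _),
            lintegral_const_mul' _ _ (ENNReal.div_ne_top hAt hσ0),
            lintegral_const_mul' _ _ (ENNReal.div_ne_top hBt hσ0)]
      _ ≤ σ ^ p * ∫⁻ a, (A / σ * (A⁻¹ * f a) + B / σ * (B⁻¹ * g a)) ^ p ∂μ := by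
          gcongr with a
          exact arith_mean2_rpow_le_rpow_arith_mean hw _ _ hp₀ hp₁
      _ = ∫⁻ a, (f a + g a) ^ p ∂μ := by
          simp_rw [hsplit, ENNReal.mul_rpow_of_nonneg _ _ hp₀.le]
          rw [lintegral_const_mul' _ _ (by simp [hσt, hp₀.le])]
  calc A + B = (σ ^ p) ^ (1 / p) := by
        rw [← ENNReal.rpow_mul, mul_one_div_cancel hp₀.ne', ENNReal.rpow_one]
    _ ≤ _ := by gcongr

end ENNReal

namespace Aniso

section MixedNorm

variable {m : ℕ}

theorem mixedNorm_succ (p : Fin (m + 1) → ℝ≥0∞) (hp : p (Fin.last m) ≠ ∞) (f : V (m + 1) → ℝ≥0∞) :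
    mixedNorm (m + 1) p f =
      (∫⁻ t, mixedNorm m (fun i => p i.castSucc) (fun y => f (Fin.snoc y t)) ^
        (p (Fin.last m)).toReal) ^ (1 / (p (Fin.last m)).toReal) := by
  rw [mixedNorm, lpStep, if_neg hp]

theorem mixedNorm_mono (p : Fin m → ℝ≥0∞) {f g : V m → ℝ≥0∞} (hfg : ∀ x, f x ≤ g x) :
    mixedNorm m p f ≤ mixedNorm m p g := by
  induction m with
  | zero => exact hfg _
  | succ m ih =>
    simp only [mixedNorm, lpStep]
    split_ifs
    · exact essSup_mono_ae (.of_forall fun t => ih _ fun y => hfg _)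
    · gcongr with t
      exact ih _ fun y => hfg _

theorem measurable_snoc : Measurable fun q : V m × ℝ => (Fin.snoc q.1 q.2 : V (m + 1)) := by
  refine measurable_pi_lambda _ fun i => ?_
  induction i using Fin.lastCases with
  | last => simpa only [Fin.snoc_last] using measurable_snd
  | cast j =>
    simp only [Fin.snoc_castSucc]
    exact (measurable_pi_apply j).comp measurable_fst

theorem measurable_mixedNorm_prod_right {α : Type*} [MeasurableSpace α] {p : Fin m → ℝ≥0∞}
    (hp : ∀ i, p i ≠ ∞) {F : α × V m → ℝ≥0∞} (hF : Measurable F) :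
    Measurable fun a => mixedNorm m p fun y => F (a, y) := by
  induction m generalizing α with
  | zero => exact hF.comp (measurable_id.prodMk measurable_const)
  | succ m ih =>
    simp only [mixedNorm_succ p (hp _)]
    have hF' : Measurable fun q : (α × ℝ) × V m => F (q.1.1, Fin.snoc q.2 q.1.2) :=
      hF.comp ((measurable_fst.comp measurable_fst).prodMk
        (measurable_snoc.comp (measurable_snd.prodMk (measurable_snd.comp measurable_fst))))
    exact ((ih (fun i => hp _) hF').pow_const _).lintegral_prod_right'.pow_const _

theorem mixedNorm_const_mul {p : Fin m → ℝ≥0∞} (hp₀ : ∀ i, p i ≠ 0) (hp_top : ∀ i, p i ≠ ∞)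
    {c : ℝ≥0∞} (hc : c ≠ ∞) (f : V m → ℝ≥0∞) :
    mixedNorm m p (fun x => c * f x) = c * mixedNorm m p f := by
  induction m with
  | zero => rfl
  | succ m ih =>
    have hq : 0 < (p (Fin.last m)).toReal := ENNReal.toReal_pos (hp₀ _) (hp_top _)
    simp only [mixedNorm_succ p (hp_top _), ih (fun i => hp₀ _) (fun i => hp_top _),
      ENNReal.mul_rpow_of_nonneg _ _ hq.le]
    rw [lintegral_const_mul' _ _ (ENNReal.rpow_ne_top_of_nonneg hq.le hc),
      ENNReal.mul_rpow_of_nonneg _ _ (by positivity), ← ENNReal.rpow_mul,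
      mul_one_div_cancel hq.ne', ENNReal.rpow_one]

theorem mixedNorm_add_le {p : Fin m → ℝ≥0∞} (hp₀ : ∀ i, p i ≠ 0) (hp₁ : ∀ i, p i ≤ 1)
    {f : V m → ℝ≥0∞} (hf : Measurable f) (g : V m → ℝ≥0∞) :
    mixedNorm m p f + mixedNorm m p g ≤ mixedNorm m p (fun x => f x + g x) := by
  induction m with
  | zero => exact le_rfl
  | succ m ih =>
    have hp_top : ∀ i, p i ≠ ∞ := fun i => ne_top_of_le_ne_top one_ne_top (hp₁ i)
    have hq₀ : 0 < (p (Fin.last m)).toReal := ENNReal.toReal_pos (hp₀ _) (hp_top _)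
    have hq₁ : (p (Fin.last m)).toReal ≤ 1 := by
      simpa using ENNReal.toReal_mono one_ne_top (hp₁ (Fin.last m))
    have hslice : ∀ t, Measurable fun y : V m => f (Fin.snoc y t) := fun t =>
      hf.comp (measurable_snoc.comp (measurable_id.prodMk measurable_const))
    have hu : Measurable fun t => mixedNorm m (fun i => p i.castSucc) fun y => f (Fin.snoc y t) :=
      measurable_mixedNorm_prod_right (fun i => hp_top _)
        (hf.comp (measurable_snoc.comp (measurable_snd.prodMk measurable_fst)))
    simp only [mixedNorm_succ p (hp_top _)]
    refine (ENNReal.lintegral_Lp_add_lintegral_Lp_le hu.aemeasurable hq₀ hq₁).trans ?_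
    gcongr with t
    exact ih (fun i => hp₀ _) (fun i => hp₁ _) (hslice t) _

theorem sum_mixedNorm_le {ι : Type*} {p : Fin m → ℝ≥0∞} (hp₀ : ∀ i, p i ≠ 0) (hp₁ : ∀ i, p i ≤ 1)
    {f : ι → V m → ℝ≥0∞} (hf : ∀ i, Measurable (f i)) (s : Finset ι) :
    ∑ i ∈ s, mixedNorm m p (f i) ≤ mixedNorm m p (fun x => ∑ i ∈ s, f i x) := by
  classical
  induction s using Finset.induction with
  | empty => exact zero_le
  | insert j s hj ih =>
    simp only [Finset.sum_insert hj]
    exact (add_le_add_right ih _).trans (mixedNorm_add_le hp₀ hp₁ (hf j) _)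

theorem tsum_mixedNorm_le {ι : Type*} {p : Fin m → ℝ≥0∞} (hp₀ : ∀ i, p i ≠ 0) (hp₁ : ∀ i, p i ≤ 1)
    {f : ι → V m → ℝ≥0∞} (hf : ∀ i, Measurable (f i)) :
    ∑' i, mixedNorm m p (f i) ≤ mixedNorm m p (fun x => ∑' i, f i x) := by
  rw [ENNReal.tsum_eq_iSup_sum]
  exact iSup_le fun s => (sum_mixedNorm_le hp₀ hp₁ hf s).trans
    (mixedNorm_mono p fun x => ENNReal.sum_le_tsum s)

theorem tsum_le_mixedNorm_rpow_tsum {ι : Type*} {p : Fin m → ℝ≥0∞} (hp₀ : ∀ i, p i ≠ 0)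
    (hp₁ : ∀ i, p i ≤ 1) {pu : ℝ} (hpu₀ : 0 < pu) (hpu₁ : pu ≤ 1) (a : ι → ℝ≥0)
    {B : ι → Set (V m)} (hB : ∀ i, MeasurableSet (B i))
    (hB₀ : ∀ i, mixedNorm m p ((B i).indicator fun _ => 1) ≠ 0)
    (hB_top : ∀ i, mixedNorm m p ((B i).indicator fun _ => 1) ≠ ∞) :
    ∑' i, (a i : ℝ≥0∞) ≤
      mixedNorm m p (fun x =>
        (∑' i, (((a i : ℝ≥0∞) * (B i).indicator (fun _ => (1 : ℝ≥0∞)) x) /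
            mixedNorm m p ((B i).indicator fun _ => 1)) ^ pu) ^ (1 / pu)) := by
  have hp_top : ∀ i, p i ≠ ∞ := fun i => ne_top_of_le_ne_top one_ne_top (hp₁ i)
  set c := fun i => mixedNorm m p ((B i).indicator fun _ => 1)
  calc ∑' i, (a i : ℝ≥0∞)
      = ∑' i, mixedNorm m p (fun x => a i / c i * (B i).indicator (fun _ => 1) x) := by
        refine tsum_congr fun i => ?_
        rw [mixedNorm_const_mul hp₀ hp_top (ENNReal.div_ne_top coe_ne_top (hB₀ i)),
          ENNReal.div_mul_cancel (hB₀ i) (hB_top i)]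
    _ ≤ mixedNorm m p (fun x => ∑' i, a i / c i * (B i).indicator (fun _ => 1) x) :=
        tsum_mixedNorm_le hp₀ hp₁ fun i => (measurable_const.indicator (hB i)).const_mul _
    _ ≤ _ := mixedNorm_mono p fun x => by
        simp only [← ENNReal.mul_div_right_comm]
        exact ENNReal.tsum_le_rpow_tsum_rpow _ hpu₀ hpu₁

end MixedNorm

section Boxes

variable {m : ℕ}

theorem indicator_pi_Ioo_snoc (a b : V (m + 1)) (y : V m) (t : ℝ) :
    (univ.pi fun i => Ioo (a i) (b i)).indicator (fun _ => (1 : ℝ≥0∞)) (Fin.snoc y t : V (m + 1)) =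
      (Ioo (a (Fin.last m)) (b (Fin.last m))).indicator 1 t *
        (univ.pi fun i : Fin m => Ioo (a i.castSucc) (b i.castSucc)).indicator (fun _ => 1) y := by
  have hmem : (Fin.snoc y t : V (m + 1)) ∈ univ.pi (fun i => Ioo (a i) (b i)) ↔
      t ∈ Ioo (a (Fin.last m)) (b (Fin.last m)) ∧
        y ∈ univ.pi fun i : Fin m => Ioo (a i.castSucc) (b i.castSucc) := by
    simp only [Set.mem_univ_pi, Fin.forall_fin_succ', Fin.snoc_castSucc, Fin.snoc_last, and_comm]
  by_cases ht : t ∈ Ioo (a (Fin.last m)) (b (Fin.last m)) <;>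
    by_cases hy : y ∈ univ.pi fun i : Fin m => Ioo (a i.castSucc) (b i.castSucc) <;>
    simp [Set.indicator, hmem, ht, hy]

theorem mixedNorm_indicator_pi_Ioo {p : Fin m → ℝ≥0∞} (hp₀ : ∀ i, p i ≠ 0) (hp_top : ∀ i, p i ≠ ∞)
    (a b : V m) :
    mixedNorm m p ((univ.pi fun i => Ioo (a i) (b i)).indicator fun _ => 1) =
      ∏ i, ENNReal.ofReal (b i - a i) ^ (1 / (p i).toReal) := by
  induction m with
  | zero => simp [mixedNorm]
  | succ m ih =>
    have hq : 0 < (p (Fin.last m)).toReal := ENNReal.toReal_pos (hp₀ _) (hp_top _)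
    have hind : ∀ t, (Ioo (a (Fin.last m)) (b (Fin.last m))).indicator (1 : ℝ → ℝ≥0∞) t ≠ ∞ :=
      fun t => ne_top_of_le_ne_top one_ne_top (Set.indicator_le_self' (by simp) t)
    rw [mixedNorm_succ p (hp_top _)]
    simp only [indicator_pi_Ioo_snoc, ih (fun i => hp₀ _) (fun i => hp_top _),
      mixedNorm_const_mul (fun i => hp₀ _) (fun i => hp_top _) (hind _)]
    have hind_rpow : ∀ t, (Ioo (a (Fin.last m)) (b (Fin.last m))).indicator (1 : ℝ → ℝ≥0∞) t ^
        (p (Fin.last m)).toReal = (Ioo (a (Fin.last m)) (b (Fin.last m))).indicator 1 t := by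
      intro t
      by_cases ht : t ∈ Ioo (a (Fin.last m)) (b (Fin.last m)) <;> simp [ht, hq]
    simp only [ENNReal.mul_rpow_of_nonneg _ _ hq.le, hind_rpow]
    rw [lintegral_mul_const _ (measurable_one.indicator measurableSet_Ioo),
      lintegral_indicator_one measurableSet_Ioo, Real.volume_Ioo, ENNReal.mul_rpow_of_nonneg _ _ (by positivity), ← ENNReal.rpow_mul,
      mul_one_div_cancel hq.ne', ENNReal.rpow_one, Fin.prod_univ_castSucc, mul_comm]

theorem ball_eq_univ_pi_Ioo (z : V m) {ε : ℝ} (hε : 0 < ε) :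
    Metric.ball z ε = univ.pi fun i => Ioo (z i - ε) (z i + ε) := by
  simp only [ball_pi z hε, Real.ball_eq_Ioo]

theorem mixedNorm_indicator_ball {p : Fin m → ℝ≥0∞} (hp₀ : ∀ i, p i ≠ 0) (hp_top : ∀ i, p i ≠ ∞)
    (z : V m) {ε : ℝ} (hε : 0 < ε) :
    mixedNorm m p ((Metric.ball z ε).indicator fun _ => 1) =
      ∏ i, ENNReal.ofReal (2 * ε) ^ (1 / (p i).toReal) := by
  rw [ball_eq_univ_pi_Ioo z hε, mixedNorm_indicator_pi_Ioo hp₀ hp_top]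
  congr! 3; ring

theorem mixedNorm_indicator_ne_zero {p : Fin m → ℝ≥0∞} (hp₀ : ∀ i, p i ≠ 0) (hp_top : ∀ i, p i ≠ ∞)
    {S : Set (V m)} (hS : IsOpen S) (hne : S.Nonempty) :
    mixedNorm m p (S.indicator fun _ => 1) ≠ 0 := by
  obtain ⟨z, hz⟩ := hne
  obtain ⟨ε, hε, hball⟩ := Metric.isOpen_iff.mp hS z hz
  refine (lt_of_lt_of_le ?_ (mixedNorm_mono p
    fun x => Set.indicator_le_indicator_of_subset hball (fun _ => zero_le) x)).ne'
  rw [mixedNorm_indicator_ball hp₀ hp_top z hε]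
  exact CanonicallyOrderedAdd.prod_pos.mpr fun i _ =>
    ENNReal.rpow_pos (ENNReal.ofReal_pos.mpr (by positivity)) ofReal_ne_top

theorem mixedNorm_indicator_ne_top {p : Fin m → ℝ≥0∞} (hp₀ : ∀ i, p i ≠ 0) (hp_top : ∀ i, p i ≠ ∞)
    {S : Set (V m)} (hS : Bornology.IsBounded S) :
    mixedNorm m p (S.indicator fun _ => 1) ≠ ∞ := by
  obtain ⟨R, hR, hball⟩ := hS.subset_ball_lt 0 0
  refine ne_top_of_le_ne_top ?_ (mixedNorm_mono p
    fun x => Set.indicator_le_indicator_of_subset hball (fun _ => zero_le) x)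
  rw [mixedNorm_indicator_ball hp₀ hp_top 0 hR]
  exact ENNReal.prod_ne_top fun i _ => ENNReal.rpow_ne_top_of_nonneg (by positivity) ofReal_ne_top

end Boxes

section DilatedBalls

variable {n : ℕ} {A : GLn n} {Δ S : Set (V n)}

theorem IsEllipsoid.isBounded (hΔ : IsEllipsoid Δ) : Bornology.IsBounded Δ := by
  obtain ⟨T, rfl⟩ := hΔ
  refine Bornology.IsBounded.image_of_continuous
    ((Metric.isBounded_closedBall (x := 0) (r := 1)).subset fun x hx => ?_)
    (continuous_const.matrix_mulVec continuous_id)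
  rw [mem_closedBall_zero_iff, pi_norm_le_iff_of_nonneg zero_le_one]
  intro i
  rw [Real.norm_eq_abs, ← Real.sqrt_sq_eq_abs]
  calc Real.sqrt (x i ^ 2) ≤ euclNorm x :=
        Real.sqrt_le_sqrt (Finset.single_le_sum (fun j _ => sq_nonneg (x j)) (Finset.mem_univ i))
    _ ≤ 1 := le_of_lt hx

theorem isOpen_of_mem_dilatedBalls (hΔ : IsOpen Δ) (hS : S ∈ dilatedBalls A Δ) : IsOpen S := by
  obtain ⟨x, k, rfl⟩ := hS
  have hpre : (x + ·) '' dball A Δ k =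
      (fun y => Matrix.mulVec (((A ^ k)⁻¹ : GLn n) : Matrix (Fin n) (Fin n) ℝ) (y - x)) ⁻¹' Δ := by
    rw [dball, image_image]
    refine congrFun (image_eq_preimage_of_inverse (fun y => ?_) (fun y => ?_)) Δ
    · rw [add_sub_cancel_left, Matrix.mulVec_mulVec, ← Units.val_mul, inv_mul_cancel,
        Units.val_one, Matrix.one_mulVec]
    · rw [Matrix.mulVec_mulVec, ← Units.val_mul, mul_inv_cancel, Units.val_one,
        Matrix.one_mulVec, add_sub_cancel]
  rw [hpre]
  exact hΔ.preimage (continuous_const.matrix_mulVec (continuous_id.sub continuous_const))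

theorem isBounded_of_mem_dilatedBalls (hΔ : Bornology.IsBounded Δ) (hS : S ∈ dilatedBalls A Δ) :
    Bornology.IsBounded S := by
  obtain ⟨x, k, rfl⟩ := hS
  rw [dball, image_image]
  exact hΔ.image_of_continuous (continuous_const.add (continuous_const.matrix_mulVec continuous_id))

theorem nonempty_of_mem_dilatedBalls (hΔ : Δ.Nonempty) (hS : S ∈ dilatedBalls A Δ) :
    S.Nonempty := by
  obtain ⟨x, k, rfl⟩ := hS
  exact (hΔ.image _).image _

end DilatedBalls

/-- For `p⃗ ∈ (0,1]^n` and `p̲ ∈ (0, min{p₋,1})`, the sum `Σ|λ_i|`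
is controlled by the atomic-type quantity. -/
theorem tsum_le_atomSum (n : ℕ) (A : GLn n) (Δ : Set (V n)) (r : ℝ)
    (h : DilationSetup A Δ r) (p : Fin n → ℝ≥0∞) (hp : ∀ i, 0 < p i ∧ p i ≤ 1)
    (pu : ℝ) (hpu : 0 < pu) (hpu' : ENNReal.ofReal pu < min 1 (⨅ i, p i))
    (lam : ℕ → ℂ) (Bs : ℕ → Set (V n)) (hBs : ∀ i, Bs i ∈ dilatedBalls A Δ) :
    ∑' i, (‖lam i‖₊ : ℝ≥0∞) ≤
      mixedNorm n p (fun x =>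
        (∑' i, (((‖lam i‖₊ : ℝ≥0∞) * (Bs i).indicator (fun _ => (1 : ℝ≥0∞)) x) /
            mixedNorm n p ((Bs i).indicator fun _ => 1)) ^ pu) ^ (1 / pu)) := by
  have hp₀ : ∀ i, p i ≠ 0 := fun i => (hp i).1.ne'
  have hp_top : ∀ i, p i ≠ ∞ := fun i => ne_top_of_le_ne_top one_ne_top (hp i).2
  have hpu₁ : pu ≤ 1 := (ENNReal.ofReal_lt_one.mp (hpu'.trans_le (min_le_left _ _))).le
  have hΔ : Δ.Nonempty := nonempty_of_measure_ne_zero (by rw [h.volume_eq]; exact one_ne_zero)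
  have hopen : ∀ i, IsOpen (Bs i) := fun i => isOpen_of_mem_dilatedBalls h.isOpen (hBs i)
  exact tsum_le_mixedNorm_rpow_tsum hp₀ (fun i => (hp i).2) hpu hpu₁ (fun i => ‖lam i‖₊)
    (fun i => (hopen i).measurableSet)
    (fun i => mixedNorm_indicator_ne_zero hp₀ hp_top (hopen i)
      (nonempty_of_mem_dilatedBalls hΔ (hBs i)))
    (fun i => mixedNorm_indicator_ne_top hp₀ hp_top
      (isBounded_of_mem_dilatedBalls h.ellipsoid.isBounded (hBs i)))

end Aniso
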